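/- Let C ⊆ ℝ^m and D ⊆ ℝ^n be nonzero closed convex cones with nonempty interior, and A ∈ ℝ^{n×m}. Then inf{ ‖Δ‖ : Δ ∈ ℝ^{n×m}, A + Δ ∈ 𝒫(C,D) } = σ_{C→D}(A) and inf{ ‖Δ‖ : Δ ∈ ℝ^{n×m}, A + Δ ∈ 𝒟(C,D) } = σ_{D→C}(−Aᵀ), where ‖Δ‖ denotes the operator norm; moreover both infima are attained. -/

import Mathlib

open MeasureTheory ProbabilityTheory Metric Set
open scoped InnerProductSpace
open scoped Classical
open scoped Pointwise

noncomputable section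

/-- Euclidean space `ℝ^k`. -/
abbrev Euc (k : ℕ) : Type := EuclideanSpace ℝ (Fin k)

/-- The linear action of a matrix `A ∈ ℝ^{n×m}` on Euclidean space, `x ↦ Ax`. -/
def mulE {m n : ℕ} (A : Matrix (Fin n) (Fin m) ℝ) (x : Euc m) : Euc n :=
  Matrix.toEuclideanLin A x

/-- The metric projection onto a set `S`: the point of `S` closest to `y`
(if a unique closest point characterizing property holds; junk value `0` otherwise). -/
def metricProj {k : ℕ} (S : Set (Euc k)) (y : Euc k) : Euc k :=
  if h : ∃ z, z ∈ S ∧ ∀ w ∈ S, dist y z ≤ dist y w then h.choose else 0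

/-- `C` is a closed convex cone (containing the origin). -/
def IsClosedConvexCone {k : ℕ} (C : Set (Euc k)) : Prop :=
  IsClosed C ∧ Convex ℝ C ∧ (∀ c : ℝ, 0 ≤ c → ∀ x ∈ C, c • x ∈ C) ∧ (0 : Euc k) ∈ C

/-- The polar cone `S° = {z | ⟨x,z⟩ ≤ 0 ∀ x ∈ S}`. -/
def polarCone {k : ℕ} (S : Set (Euc k)) : Set (Euc k) :=
  {z | ∀ x ∈ S, ⟪x, z⟫_ℝ ≤ 0}

/-- The restricted norm `‖A‖_{C→D} = max_{x ∈ C ∩ S^{m-1}} ‖Proj_D (Ax)‖`. -/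
def resNorm {m n : ℕ} (C : Set (Euc m)) (D : Set (Euc n)) (A : Matrix (Fin n) (Fin m) ℝ) : ℝ :=
  sSup ((fun x => ‖metricProj D (mulE A x)‖) '' (C ∩ sphere 0 1))

/-- The restricted singular value `σ_{C→D}(A) = min_{x ∈ C ∩ S^{m-1}} ‖Proj_D (Ax)‖`. -/
def resSval {m n : ℕ} (C : Set (Euc m)) (D : Set (Euc n)) (A : Matrix (Fin n) (Fin m) ℝ) : ℝ :=
  sInf ((fun x => ‖metricProj D (mulE A x)‖) '' (C ∩ sphere 0 1))

/-- The restricted norm for arbitrary (not necessarily closed) cones: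
`‖B‖_{K→K'} = sup { ⟨Bx, y⟩ : x ∈ K ∩ B^ℓ, y ∈ K' ∩ B^p }`. -/
def resNormGen {l p : ℕ} (K : Set (Euc l)) (K' : Set (Euc p))
    (B : Matrix (Fin p) (Fin l) ℝ) : ℝ :=
  sSup (Set.image2 (fun x y => ⟪mulE B x, y⟫_ℝ) (K ∩ closedBall 0 1) (K' ∩ closedBall 0 1))

/-- The operator (spectral) norm of a matrix. -/
def opNorm {m n : ℕ} (A : Matrix (Fin n) (Fin m) ℝ) : ℝ :=
  ‖LinearMap.toContinuousLinearMap (Matrix.toEuclideanLin A)‖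

/-- The standard Gaussian measure on `ℝ^k` (i.i.d. N(0,1) coordinates). -/
def stdGaussianE (k : ℕ) : Measure (Euc k) :=
  Measure.map (⇑(EuclideanSpace.equiv (Fin k) ℝ).symm)
    (Measure.pi fun _ : Fin k => gaussianReal 0 1)

/-- The standard Gaussian measure on `n × m` arrays (i.i.d. N(0,1) entries). -/
def stdGaussianPi (n m : ℕ) : Measure (Fin n → Fin m → ℝ) :=
  Measure.pi fun _ : Fin n => Measure.pi fun _ : Fin m => gaussianReal 0 1

/-- The support function `h_K(x) = sup_{z ∈ K} ⟨x, z⟩`. -/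
def suppFn {k : ℕ} (K : Set (Euc k)) (x : Euc k) : ℝ := sSup ((fun z => ⟪x, z⟫_ℝ) '' K)

/-- The capped-angle cosine `cos d̄(X,Y) = max{⟨x,y⟩ : x ∈ X ∩ B, y ∈ Y ∩ B}`. -/
def cosAng {k : ℕ} (X Y : Set (Euc k)) : ℝ :=
  sSup (Set.image2 (fun x y => ⟪x, y⟫_ℝ) (X ∩ closedBall 0 1) (Y ∩ closedBall 0 1))

/-- `sin d̄(X,Y) = √(1 - cos d̄(X,Y)²)`. -/
def sinAng {k : ℕ} (X Y : Set (Euc k)) : ℝ := Real.sqrt (1 - cosAng X Y ^ 2)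

/-- The Kronecker (tensor) product `x ⊗ y ∈ ℝ^{mn}`. -/
def kron {m n : ℕ} (x : Euc m) (y : Euc n) : EuclideanSpace ℝ (Fin m × Fin n) :=
  (EuclideanSpace.equiv (Fin m × Fin n) ℝ).symm (fun p => x p.1 * y p.2)

/-- The primal feasible set `𝒫(C,D) = {A | ∃ x ∈ C \ {0}, Ax ∈ D°}`. -/
def primalSet {m n : ℕ} (C : Set (Euc m)) (D : Set (Euc n)) :
    Set (Matrix (Fin n) (Fin m) ℝ) :=
  {A | ∃ x ∈ C, x ≠ 0 ∧ mulE A x ∈ polarCone D}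

/-- The dual feasible set `𝒟(C,D) = {A | ∃ y ∈ D \ {0}, -Aᵀy ∈ C°}`. -/
def dualSet {m n : ℕ} (C : Set (Euc m)) (D : Set (Euc n)) :
    Set (Matrix (Fin n) (Fin m) ℝ) :=
  {A | ∃ y ∈ D, y ≠ 0 ∧ -(mulE A.transpose y) ∈ polarCone C}

/-- `K₂` is a `0`-contraction of `K₁`: there are generating sets `M₁` of `K₁`, `M₂` of `K₂`
(i.e. `Kᵢ` is the closed convex hull of `Mᵢ`) and a surjection `φ : M₁ → M₂` that is
`1`-Lipschitz and norm-nonincreasing. -/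
def IsZeroContractionOf {E₁ E₂ : Type*} [NormedAddCommGroup E₁] [NormedSpace ℝ E₁]
    [NormedAddCommGroup E₂] [NormedSpace ℝ E₂] (K₁ : Set E₁) (K₂ : Set E₂) : Prop :=
  ∃ (M₁ : Set E₁) (M₂ : Set E₂) (φ : E₁ → E₂),
    closure (convexHull ℝ M₁) = K₁ ∧ closure (convexHull ℝ M₂) = K₂ ∧
    φ '' M₁ = M₂ ∧
    (∀ x ∈ M₁, ∀ x' ∈ M₁, ‖φ x - φ x'‖ ≤ ‖x - x'‖) ∧
    (∀ x ∈ M₁, ‖φ x‖ ≤ ‖x‖)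

/-- The pair `(x, y)` regarded as an element of the Euclidean (ℓ²) product. -/
def pairL2 {m n : ℕ} (x : Euc m) (y : Euc n) : WithLp 2 (Euc m × Euc n) :=
  (WithLp.equiv 2 (Euc m × Euc n)).symm (x, y)

/-- The product `K × K'` as a subset of the Euclidean (ℓ²) product space. -/
def prodL2 {m n : ℕ} (K : Set (Euc m)) (K' : Set (Euc n)) : Set (WithLp 2 (Euc m × Euc n)) :=
  {q | ((WithLp.equiv 2 (Euc m × Euc n)) q).1 ∈ K ∧ ((WithLp.equiv 2 (Euc m × Euc n)) q).2 ∈ K'}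


lemma metricProj_spec {k : ℕ} {S : Set (Euc k)} (hne : S.Nonempty) (hcl : IsClosed S)
    (hcv : Convex ℝ S) (y : Euc k) :
    metricProj S y ∈ S ∧ ∀ w ∈ S, ⟪y - metricProj S y, w - metricProj S y⟫_ℝ ≤ 0 := by
  obtain ⟨v, hvS, hv⟩ := exists_norm_eq_iInf_of_complete_convex hne hcl.isComplete hcv y
  have hbdd : BddBelow (Set.range fun w : S => ‖y - (w : Euc k)‖) :=
    ⟨0, Set.forall_mem_range.2 fun _ => norm_nonneg _⟩
  have hex : ∃ z, z ∈ S ∧ ∀ w ∈ S, dist y z ≤ dist y w := by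
    refine ⟨v, hvS, fun w hw => ?_⟩
    rw [dist_eq_norm, dist_eq_norm, hv]
    exact ciInf_le hbdd (⟨w, hw⟩ : S)
  rw [metricProj, dif_pos hex]
  obtain ⟨hz, hmin⟩ := hex.choose_spec
  haveI : Nonempty S := ⟨⟨_, hz⟩⟩
  refine ⟨hz, ?_⟩
  rw [← norm_eq_iInf_iff_real_inner_le_zero hcv hz]
  refine le_antisymm (le_ciInf fun w => ?_) (ciInf_le hbdd (⟨_, hz⟩ : S))
  simpa [dist_eq_norm] using hmin w w.2

lemma varIneq_dist {k : ℕ} {S : Set (Euc k)} {u v p q : Euc k} (hp : p ∈ S) (hq : q ∈ S)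
    (hup : ∀ w ∈ S, ⟪u - p, w - p⟫_ℝ ≤ 0) (hvq : ∀ w ∈ S, ⟪v - q, w - q⟫_ℝ ≤ 0) :
    ‖p - q‖ ≤ ‖u - v‖ := by
  have h1 := hup q hq
  have h2 := hvq p hp
  have expand : ⟪u - p, q - p⟫_ℝ + ⟪v - q, p - q⟫_ℝ = ⟪u - v, q - p⟫_ℝ + ‖q - p‖ ^ 2 := by
    rw [← real_inner_self_eq_norm_sq]
    simp only [inner_sub_left, inner_sub_right]
    ring
  have hsq : ‖q - p‖ ^ 2 ≤ ⟪u - v, p - q⟫_ℝ := by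
    have : ⟪u - v, q - p⟫_ℝ = -⟪u - v, p - q⟫_ℝ := by
      rw [← inner_neg_right]; congr 1; abel
    nlinarith [h1, h2, expand]
  have hle : ‖q - p‖ ^ 2 ≤ ‖u - v‖ * ‖p - q‖ := hsq.trans (real_inner_le_norm _ _)
  rw [show q - p = -(p - q) by abel, norm_neg] at hle
  nlinarith [norm_nonneg (p - q), norm_nonneg (u - v)]

lemma metricProj_lipschitz {k : ℕ} {S : Set (Euc k)} (hne : S.Nonempty) (hcl : IsClosed S)
    (hcv : Convex ℝ S) (u v : Euc k) :
    ‖metricProj S u - metricProj S v‖ ≤ ‖u - v‖ := by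
  obtain ⟨hp, hup⟩ := metricProj_spec hne hcl hcv u
  obtain ⟨hq, hvq⟩ := metricProj_spec hne hcl hcv v
  exact varIneq_dist hp hq hup hvq

lemma metricProj_eq_of_varIneq {k : ℕ} {S : Set (Euc k)} (hne : S.Nonempty) (hcl : IsClosed S)
    (hcv : Convex ℝ S) {u p : Euc k} (hp : p ∈ S) (hvar : ∀ w ∈ S, ⟪u - p, w - p⟫_ℝ ≤ 0) :
    metricProj S u = p := by
  obtain ⟨hq, huq⟩ := metricProj_spec hne hcl hcv u
  have := varIneq_dist hq hp huq hvar (u := u) (v := u)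
  simp only [sub_self, norm_zero] at this
  rw [← sub_eq_zero]
  exact norm_le_zero_iff.mp this

lemma cone_add {k : ℕ} {C : Set (Euc k)} (hC : IsClosedConvexCone C) {x y : Euc k}
    (hx : x ∈ C) (hy : y ∈ C) : x + y ∈ C := by
  have h := hC.2.1 hx hy (by norm_num : (0:ℝ) ≤ 1/2) (by norm_num : (0:ℝ) ≤ 1/2) (by norm_num)
  have := hC.2.2.1 2 (by norm_num) _ h
  rwa [smul_add, smul_smul, smul_smul, show (2:ℝ) * (1/2) = 1 by norm_num, one_smul,
    one_smul] at this

lemma metricProj_of_polar {k : ℕ} {D : Set (Euc k)} (hD : IsClosedConvexCone D) {v : Euc k}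
    (hv : v ∈ polarCone D) : metricProj D v = 0 := by
  refine metricProj_eq_of_varIneq ⟨0, hD.2.2.2⟩ hD.1 hD.2.1 hD.2.2.2 fun w hw => ?_
  simp only [sub_zero]
  rw [real_inner_comm]
  exact hv w hw

lemma moreau_residual {k : ℕ} {D : Set (Euc k)} (hD : IsClosedConvexCone D) (u : Euc k) :
    u - metricProj D u ∈ polarCone D := by
  obtain ⟨hp, hvar⟩ := metricProj_spec ⟨0, hD.2.2.2⟩ hD.1 hD.2.1 u
  intro z hz
  have := hvar (metricProj D u + z) (cone_add hD hp hz)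
  rwa [add_sub_cancel_left, real_inner_comm] at this

lemma mulE_add {m n : ℕ} (A B : Matrix (Fin n) (Fin m) ℝ) (x : Euc m) :
    mulE (A + B) x = mulE A x + mulE B x := by
  simp [mulE, map_add]

lemma mulE_smul {m n : ℕ} (A : Matrix (Fin n) (Fin m) ℝ) (c : ℝ) (x : Euc m) :
    mulE A (c • x) = c • mulE A x := by
  simp [mulE, _root_.map_smul]

lemma norm_mulE_le {m n : ℕ} (A : Matrix (Fin n) (Fin m) ℝ) (x : Euc m) :
    ‖mulE A x‖ ≤ opNorm A * ‖x‖ := by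
  have := (LinearMap.toContinuousLinearMap (Matrix.toEuclideanLin A)).le_opNorm x
  simpa [mulE, opNorm] using this

lemma polarCone_smul {k : ℕ} {D : Set (Euc k)} {z : Euc k} (hz : z ∈ polarCone D) {c : ℝ}
    (hc : 0 ≤ c) : c • z ∈ polarCone D := fun x hx => by
  rw [real_inner_smul_right]
  exact mul_nonpos_of_nonneg_of_nonpos hc (hz x hx)

lemma mulE_rankOne {m n : ℕ} (p : Euc n) (u : Euc m) (y : Euc m) :
    mulE (Matrix.of fun i j => -(p i) * u j) y = (-⟪u, y⟫_ℝ) • p := by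
  apply PiLp.ext
  intro i
  have h : mulE (Matrix.of fun i j => -(p i) * u j) y i = ∑ j, (-(p i) * u j) * y j := rfl
  rw [h, PiLp.smul_apply, smul_eq_mul, PiLp.inner_apply]
  simp only [RCLike.inner_apply, conj_trivial]
  rw [neg_mul, Finset.sum_mul, ← Finset.sum_neg_distrib]
  exact Finset.sum_congr rfl fun j _ => by ring

lemma opNorm_le_of {m n : ℕ} (A : Matrix (Fin n) (Fin m) ℝ) {M : ℝ} (hM : 0 ≤ M)
    (h : ∀ x, ‖mulE A x‖ ≤ M * ‖x‖) : opNorm A ≤ M :=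
  ContinuousLinearMap.opNorm_le_bound _ hM fun x => by
    simpa [mulE, LinearMap.coe_toContinuousLinearMap'] using h x

lemma primal_isLeast {m n : ℕ} (C : Set (Euc m)) (D : Set (Euc n))
    (hC : IsClosedConvexCone C) (hCne : C ≠ {0}) (hD : IsClosedConvexCone D)
    (A : Matrix (Fin n) (Fin m) ℝ) :
    IsLeast {r : ℝ | ∃ Δ : Matrix (Fin n) (Fin m) ℝ, A + Δ ∈ primalSet C D ∧ r = opNorm Δ}
      (resSval C D A) := by
  have hDne : D.Nonempty := ⟨0, hD.2.2.2⟩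
  have hKcpt : IsCompact (C ∩ sphere 0 1) := (isCompact_sphere (0 : Euc m) 1).inter_left hC.1
  have hKne : (C ∩ sphere (0 : Euc m) 1).Nonempty := by
    obtain ⟨x, hxC, hx0⟩ : ∃ x ∈ C, x ≠ 0 := by
      by_contra h
      push_neg at h
      exact hCne (Set.eq_singleton_iff_unique_mem.mpr ⟨hC.2.2.2, h⟩)
    have hn : ‖x‖ ≠ 0 := norm_ne_zero_iff.mpr hx0
    refine ⟨‖x‖⁻¹ • x, hC.2.2.1 _ (by positivity) _ hxC, ?_⟩
    rw [mem_sphere_zero_iff_norm, norm_smul]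
    rw [norm_inv, norm_norm, inv_mul_cancel₀ hn]
  have hlip : ∀ u v : Euc n, ‖metricProj D u - metricProj D v‖ ≤ ‖u - v‖ :=
    metricProj_lipschitz hDne hD.1 hD.2.1
  set f := fun x : Euc m => ‖metricProj D (mulE A x)‖ with hf
  have hcont : Continuous f := by
    have h1 : LipschitzWith 1 (metricProj D) := LipschitzWith.of_dist_le_mul fun u v => by
      simpa [dist_eq_norm] using hlip u v
    exact (h1.continuous.comp (Matrix.toEuclideanLin A).continuous_of_finiteDimensional).norm
  have himg : IsCompact (f '' (C ∩ sphere 0 1)) := hKcpt.image hcont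
  have himgne : (f '' (C ∩ sphere 0 1)).Nonempty := hKne.image f
  have hbdd : BddBelow (f '' (C ∩ sphere 0 1)) := himg.bddBelow
  have hres : resSval C D A = sInf (f '' (C ∩ sphere 0 1)) := rfl
  constructor
  · -- membership
    obtain ⟨u, huK, hfu⟩ := himg.sInf_mem himgne
    set p := metricProj D (mulE A u) with hp
    have hu1 : ‖u‖ = 1 := mem_sphere_zero_iff_norm.mp huK.2
    have hu0 : u ≠ 0 := by intro h; rw [h, norm_zero] at hu1; norm_num at hu1
    have hinner1 : ⟪u, u⟫_ℝ = 1 := by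
      rw [real_inner_self_eq_norm_sq, hu1]; norm_num
    set Δ := Matrix.of (fun i j => -(p i) * u j) with hΔ
    have hΔu : mulE Δ u = -p := by
      rw [hΔ, mulE_rankOne, hinner1]
      simp
    refine ⟨Δ, ⟨u, huK.1, hu0, ?_⟩, ?_⟩
    · rw [mulE_add, hΔu]
      have := moreau_residual hD (mulE A u)
      rw [← hp] at this
      simpa [sub_eq_add_neg] using this
    · have hle : opNorm Δ ≤ ‖p‖ := by
        refine opNorm_le_of _ (norm_nonneg p) fun y => ?_
        rw [hΔ, mulE_rankOne, norm_smul]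
        rw [norm_neg, Real.norm_eq_abs, mul_comm]
        exact mul_le_mul_of_nonneg_left (by simpa [hu1] using abs_real_inner_le_norm u y)
          (norm_nonneg p)
      have hge : ‖p‖ ≤ opNorm Δ := by
        have h2 := norm_mulE_le Δ u
        rw [hΔu, norm_neg, hu1, mul_one] at h2
        exact h2
      rw [hres, ← hfu]
      exact le_antisymm hge hle
  · rintro r ⟨Δ, ⟨x, hxC, hx0, hpol⟩, rfl⟩
    have hn : ‖x‖ ≠ 0 := norm_ne_zero_iff.mpr hx0
    set u := ‖x‖⁻¹ • x with hu
    have huC : u ∈ C := hC.2.2.1 _ (by positivity) _ hxC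
    have hu1 : ‖u‖ = 1 := by rw [hu, norm_smul]; rw [norm_inv, norm_norm, inv_mul_cancel₀ hn]
    have hupol : mulE (A + Δ) u ∈ polarCone D := by
      rw [hu, mulE_smul]
      exact polarCone_smul hpol (by positivity)
    have hz : metricProj D (mulE (A + Δ) u) = 0 := metricProj_of_polar hD hupol
    have key : f u ≤ opNorm Δ := by
      rw [hf]
      calc ‖metricProj D (mulE A u)‖
          = ‖metricProj D (mulE A u) - metricProj D (mulE (A + Δ) u)‖ := by rw [hz, sub_zero]
        _ ≤ ‖mulE A u - mulE (A + Δ) u‖ := hlip _ _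
        _ = ‖mulE Δ u‖ := by rw [mulE_add]; rw [show mulE A u - (mulE A u + mulE Δ u) = -(mulE Δ u) by abel, norm_neg]
        _ ≤ opNorm Δ * ‖u‖ := norm_mulE_le _ _
        _ = opNorm Δ := by rw [hu1, mul_one]
    rw [hres]
    exact (csInf_le hbdd ⟨u, ⟨huC, mem_sphere_zero_iff_norm.mpr hu1⟩, rfl⟩).trans key

lemma mulE_neg {m n : ℕ} (A : Matrix (Fin n) (Fin m) ℝ) (x : Euc m) :
    mulE (-A) x = -(mulE A x) := by
  simp [mulE, map_neg]

lemma opNorm_nonneg {m n : ℕ} (A : Matrix (Fin n) (Fin m) ℝ) : 0 ≤ opNorm A := norm_nonneg _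

lemma inner_mulE_transpose {m n : ℕ} (B : Matrix (Fin n) (Fin m) ℝ) (y : Euc n) (x : Euc m) :
    ⟪mulE B.transpose y, x⟫_ℝ = ⟪y, mulE B x⟫_ℝ := by
  have h1 : ∀ j, mulE B.transpose y j = ∑ i, B i j * y i := fun j => rfl
  have h2 : ∀ i, mulE B x i = ∑ j, B i j * x j := fun i => rfl
  rw [PiLp.inner_apply, PiLp.inner_apply]
  simp only [RCLike.inner_apply, conj_trivial, h1, h2]
  simp only [Finset.sum_mul, Finset.mul_sum]
  rw [Finset.sum_comm]
  congr 1 with i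
  congr 1 with j
  ring

lemma opNorm_transpose_le {m n : ℕ} (B : Matrix (Fin n) (Fin m) ℝ) :
    opNorm B.transpose ≤ opNorm B := by
  refine opNorm_le_of _ (opNorm_nonneg B) fun y => ?_
  set w := mulE B.transpose y with hw
  rcases eq_or_ne ‖w‖ 0 with h0 | h0
  · rw [h0]; exact mul_nonneg (opNorm_nonneg B) (norm_nonneg y)
  have hsq : ‖w‖ ^ 2 ≤ opNorm B * ‖y‖ * ‖w‖ := by
    calc ‖w‖ ^ 2 = ⟪w, w⟫_ℝ := (real_inner_self_eq_norm_sq w).symm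
      _ = ⟪y, mulE B w⟫_ℝ := by rw [hw, inner_mulE_transpose]
      _ ≤ ‖y‖ * ‖mulE B w‖ := real_inner_le_norm _ _
      _ ≤ ‖y‖ * (opNorm B * ‖w‖) := by
          exact mul_le_mul_of_nonneg_left (norm_mulE_le _ _) (norm_nonneg y)
      _ = opNorm B * ‖y‖ * ‖w‖ := by ring
  have hwpos : 0 < ‖w‖ := lt_of_le_of_ne (norm_nonneg w) (Ne.symm h0)
  nlinarith [hsq, hwpos]

lemma opNorm_transpose {m n : ℕ} (B : Matrix (Fin n) (Fin m) ℝ) :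
    opNorm B.transpose = opNorm B := by
  refine le_antisymm (opNorm_transpose_le B) ?_
  have := opNorm_transpose_le B.transpose
  rwa [Matrix.transpose_transpose] at this

lemma opNorm_neg {m n : ℕ} (B : Matrix (Fin n) (Fin m) ℝ) : opNorm (-B) = opNorm B := by
  have h : ∀ (A : Matrix (Fin n) (Fin m) ℝ), opNorm (-A) ≤ opNorm A := fun A =>
    opNorm_le_of _ (opNorm_nonneg A) fun x => by rw [mulE_neg, norm_neg]; exact norm_mulE_le A x
  refine le_antisymm (h B) ?_
  have := h (-B)
  rwa [neg_neg] at this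

lemma dual_iff {m n : ℕ} (C : Set (Euc m)) (D : Set (Euc n))
    (A Δ : Matrix (Fin n) (Fin m) ℝ) :
    A + Δ ∈ dualSet C D ↔ (-A.transpose) + (-Δ.transpose) ∈ primalSet D C := by
  have hM : -A.transpose + -Δ.transpose = -(A + Δ).transpose := by
    rw [Matrix.transpose_add]; abel
  constructor
  · rintro ⟨y, hy, hy0, hpol⟩
    exact ⟨y, hy, hy0, by rw [hM, mulE_neg]; exact hpol⟩
  · rintro ⟨y, hy, hy0, hpol⟩
    refine ⟨y, hy, hy0, ?_⟩
    rw [← mulE_neg, ← hM]; exact hpol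

/-- For nonzero closed convex cones with nonempty interior, the (attained)
distance in operator norm from `A` to `𝒫(C,D)` is `σ_{C→D}(A)` and to `𝒟(C,D)` is
`σ_{D→C}(−Aᵀ)`. -/
theorem statement10 {m n : ℕ} (C : Set (Euc m)) (D : Set (Euc n))
    (hC : IsClosedConvexCone C) (hCne : C ≠ {0}) (hCint : (interior C).Nonempty)
    (hD : IsClosedConvexCone D) (hDne : D ≠ {0}) (hDint : (interior D).Nonempty)
    (A : Matrix (Fin n) (Fin m) ℝ) :
    IsLeast {r : ℝ | ∃ Δ : Matrix (Fin n) (Fin m) ℝ, A + Δ ∈ primalSet C D ∧ r = opNorm Δ}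
      (resSval C D A) ∧
    IsLeast {r : ℝ | ∃ Δ : Matrix (Fin n) (Fin m) ℝ, A + Δ ∈ dualSet C D ∧ r = opNorm Δ}
      (resSval D C (-A.transpose)) := by
  refine ⟨primal_isLeast C D hC hCne hD A, ?_⟩
  have hset : {r : ℝ | ∃ Δ : Matrix (Fin n) (Fin m) ℝ, A + Δ ∈ dualSet C D ∧ r = opNorm Δ}
      = {r : ℝ | ∃ Δ : Matrix (Fin m) (Fin n) ℝ,
          (-A.transpose) + Δ ∈ primalSet D C ∧ r = opNorm Δ} := by
    ext r
    simp only [Set.mem_setOf_eq]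
    constructor
    · rintro ⟨Δ, hΔ, rfl⟩
      exact ⟨-Δ.transpose, (dual_iff C D A Δ).mp hΔ, by rw [opNorm_neg, opNorm_transpose]⟩
    · rintro ⟨Δ', hΔ', rfl⟩
      refine ⟨-Δ'.transpose, ?_, by rw [opNorm_neg, opNorm_transpose]⟩
      rw [dual_iff]
      rwa [Matrix.transpose_neg, Matrix.transpose_transpose, neg_neg]
  rw [hset]
  exact primal_isLeast D C hD hDne hC (-A.transpose)

end
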